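/- arXiv:2502.04766 — 9 statements merged into one kernel-verified Lean document; each statement's English description precedes it below -/
import Mathlib

section
/- Let R be a commutative ring in which 3 is invertible and let θ be a ring automorphism of R with θ(θ(θ(x))) = x for all x. Let 𝔪 be a maximal ideal of R and set I = 𝔪 ∩ θ(𝔪) ∩ θ(θ(𝔪)). Then the natural map R_θ → (R/I)_θ induced by the projection R → R/I is surjective; explicitly, for every x ∈ R with θ(x) − x ∈ I there exists y ∈ R with θ(y) = y and x − y ∈ I. -/
/-! The average `y = (x + θ x + θ² x) / 3` is `θ`-fixed, and
`3 (x - y) = (x - θ x) + (x - θ² x)`, where `x - θ² x = (x - θ x) + θ (x - θ x)` lies in any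
`θ`-stable ideal containing `θ x - x`. The ideal `𝔪 ∩ θ(𝔪) ∩ θ²(𝔪)` is `θ`-stable because
`θ³ = id`. -/

section OrderThree

variable {R : Type*} [CommRing R] (θ : R →+* R) (hθ : ∀ x, θ (θ (θ x)) = x)
include hθ

theorem Ideal.map_map_map_eq_self_of_cube_eq_id (J : Ideal R) :
    ((J.map θ).map θ).map θ = J := by
  have hcomp : (θ.comp θ).comp θ = RingHom.id R := RingHom.ext hθ
  rw [Ideal.map_map, Ideal.map_map, hcomp, Ideal.map_id]

theorem Ideal.map_mem_inf_map_inf_map_map_of_cube_eq_id (J : Ideal R) {a : R}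
    (ha : a ∈ J ⊓ J.map θ ⊓ (J.map θ).map θ) :
    θ a ∈ J ⊓ J.map θ ⊓ (J.map θ).map θ := by
  obtain ⟨⟨haJ, haθJ⟩, haθθJ⟩ := ha
  refine ⟨⟨?_, Ideal.mem_map_of_mem θ haJ⟩, Ideal.mem_map_of_mem θ haθJ⟩
  rw [← Ideal.map_map_map_eq_self_of_cube_eq_id θ hθ J]
  exact Ideal.mem_map_of_mem θ haθθJ

theorem exists_fixed_sub_mem_of_cube_eq_id (h3 : IsUnit (3 : R)) {I : Ideal R}
    (hI : ∀ a ∈ I, θ a ∈ I) {x : R} (hx : θ x - x ∈ I) :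
    ∃ y : R, θ y = y ∧ x - y ∈ I := by
  obtain ⟨u, hu⟩ := h3.exists_right_inv
  have hθu : θ u = u := by
    have h3θu : 3 * θ u = 1 := by simpa [map_ofNat] using congrArg θ hu
    linear_combination u * h3θu - θ u * hu
  refine ⟨u * (x + θ x + θ (θ x)), ?_, ?_⟩
  · rw [map_mul, map_add, map_add, hθu, hθ x]
    ring
  · have hθθx : θ (θ x) - θ x ∈ I := by simpa using hI _ hx
    have hsub : x - u * (x + θ x + θ (θ x)) =
        -u * ((θ x - x) + (θ x - x) + (θ (θ x) - θ x)) := by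
      linear_combination (-x) * hu
    rw [hsub]
    exact I.mul_mem_left _ (I.add_mem (I.add_mem hx hx) hθθx)

end OrderThree

theorem stmt_1_general {R : Type*} [CommRing R] (h3 : IsUnit (3 : R))
    (θ : R ≃+* R) (hθ : ∀ x, θ (θ (θ x)) = x)
    (𝔪 : Ideal R)
    (x : R)
    (hx : θ x - x ∈ 𝔪 ⊓ Ideal.map (θ : R →+* R) 𝔪
        ⊓ Ideal.map (θ : R →+* R) (Ideal.map (θ : R →+* R) 𝔪)) :
    ∃ y : R, θ y = y ∧ x - y ∈ 𝔪 ⊓ Ideal.map (θ : R →+* R) 𝔪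
        ⊓ Ideal.map (θ : R →+* R) (Ideal.map (θ : R →+* R) 𝔪) :=
  exists_fixed_sub_mem_of_cube_eq_id (θ : R →+* R) hθ h3
    (fun _ ha => Ideal.map_mem_inf_map_inf_map_map_of_cube_eq_id _ hθ 𝔪 ha) hx

/-- Over a commutative ring `R` with `3` invertible and a ring automorphism `θ` of order
dividing 3, for a maximal ideal `𝔪` and `I = 𝔪 ∩ θ(𝔪) ∩ θ(θ(𝔪))`, the natural map
`R_θ → (R/I)_θ` is surjective. -/
theorem stmt_1 {R : Type*} [CommRing R] (h3 : IsUnit (3 : R))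
    (θ : R ≃+* R) (hθ : ∀ x, θ (θ (θ x)) = x)
    (𝔪 : Ideal R) (hm : 𝔪.IsMaximal)
    (x : R)
    (hx : θ x - x ∈ 𝔪 ⊓ Ideal.map (θ : R →+* R) 𝔪
        ⊓ Ideal.map (θ : R →+* R) (Ideal.map (θ : R →+* R) 𝔪)) :
    ∃ y : R, θ y = y ∧ x - y ∈ 𝔪 ⊓ Ideal.map (θ : R →+* R) 𝔪
        ⊓ Ideal.map (θ : R →+* R) (Ideal.map (θ : R →+* R) 𝔪) :=
  stmt_1_general h3 θ hθ 𝔪 x hx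
end

section
/- Let R be a commutative ring in which 2 is invertible and let θ be a ring automorphism of R with θ(θ(x)) = x for all x. Let 𝔪 be a maximal ideal of R and set I = 𝔪 ∩ θ(𝔪). Then the natural map 𝒜(R) → 𝒜(R/I) is surjective; explicitly, for all x₁, x₂ ∈ R with x₁·θ(x₁) − x₂ − θ(x₂) ∈ I, there exist y₁, y₂ ∈ R such that y₁·θ(y₁) = y₂ + θ(y₂), y₁ − x₁ ∈ I, and y₂ − x₂ ∈ I. -/
/-! Since `2` is invertible, every `θ`-fixed element `d` is the trace `e + θ e` of `e = d / 2`.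
The defect `d = x₁ θ(x₁) - x₂ - θ(x₂)` is `θ`-fixed and lies in `I`, so keeping `y₁ = x₁` and
replacing `x₂` by `y₂ = x₂ + d / 2` corrects it exactly, while `y₂ - x₂ = d / 2 ∈ I`. -/

section

variable {R F : Type*} [CommRing R] [FunLike F R R] [RingHomClass F R R]

lemma map_eq_self_of_two_mul_eq_one (θ : F) {c : R} (hc : 2 * c = 1) : θ c = c := by
  have hθc : 2 * θ c = 1 := by simpa [map_ofNat] using congrArg θ hc
  linear_combination c * hθc - θ c * hc

lemma exists_mem_add_map_eq_of_map_eq (h2 : IsUnit (2 : R)) (θ : F) (I : Ideal R) {d : R}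
    (hdI : d ∈ I) (hd : θ d = d) :
    ∃ e ∈ I, e + θ e = d := by
  obtain ⟨c, hc⟩ := h2.exists_right_inv
  refine ⟨c * d, I.mul_mem_left c hdI, ?_⟩
  rw [map_mul, map_eq_self_of_two_mul_eq_one θ hc, hd]
  linear_combination d * hc

lemma map_mul_map_sub_add_map (θ : F) (hθ : ∀ x, θ (θ x) = x) (x₁ x₂ : R) :
    θ (x₁ * θ x₁ - x₂ - θ x₂) = x₁ * θ x₁ - x₂ - θ x₂ := by
  simp only [map_sub, map_mul, hθ]
  ring

end

theorem stmt_2_general {R : Type*} [CommRing R] (h2 : IsUnit (2 : R))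
    (θ : R ≃+* R) (hθ : ∀ x, θ (θ x) = x)
    (𝔪 : Ideal R)
    (x₁ x₂ : R)
    (hx : x₁ * θ x₁ - x₂ - θ x₂ ∈ 𝔪 ⊓ Ideal.map (θ : R →+* R) 𝔪) :
    ∃ y₁ y₂ : R, y₁ * θ y₁ = y₂ + θ y₂ ∧
      y₁ - x₁ ∈ 𝔪 ⊓ Ideal.map (θ : R →+* R) 𝔪 ∧
      y₂ - x₂ ∈ 𝔪 ⊓ Ideal.map (θ : R →+* R) 𝔪 := by
  obtain ⟨e, heI, he⟩ := exists_mem_add_map_eq_of_map_eq h2 θ _ hx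
    (map_mul_map_sub_add_map θ hθ x₁ x₂)
  refine ⟨x₁, x₂ + e, ?_, by simp, by simpa using heI⟩
  rw [map_add]
  linear_combination -he

/-- Over a commutative ring `R` with `2` invertible and an involutive ring automorphism `θ`,
for a maximal ideal `𝔪` and `I = 𝔪 ∩ θ(𝔪)`, the natural map `𝒜(R) → 𝒜(R/I)` is surjective. -/
theorem stmt_2 {R : Type*} [CommRing R] (h2 : IsUnit (2 : R))
    (θ : R ≃+* R) (hθ : ∀ x, θ (θ x) = x)
    (𝔪 : Ideal R) (hm : 𝔪.IsMaximal)
    (x₁ x₂ : R)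
    (hx : x₁ * θ x₁ - x₂ - θ x₂ ∈ 𝔪 ⊓ Ideal.map (θ : R →+* R) 𝔪) :
    ∃ y₁ y₂ : R, y₁ * θ y₁ = y₂ + θ y₂ ∧
      y₁ - x₁ ∈ 𝔪 ⊓ Ideal.map (θ : R →+* R) 𝔪 ∧
      y₂ - x₂ ∈ 𝔪 ⊓ Ideal.map (θ : R →+* R) 𝔪 :=
  stmt_2_general h2 θ hθ 𝔪 x₁ x₂ hx
end

section
/- Let R be a commutative ring in which 2 is invertible and let θ be a ring automorphism of R with θ(θ(x)) = x for all x. Let R_θ be the fixed subring of θ and let 𝔪_θ be a maximal ideal of R_θ. Then 𝔪_θ = R_θ ∩ 𝔪_θR; that is, the contraction to R_θ of the ideal of R generated by (the image of) 𝔪_θ equals 𝔪_θ. -/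
/-- Over a commutative ring `R` with `2` invertible and an involutive ring automorphism `θ`,
for any maximal ideal `𝔪_θ` of the fixed subring `R_θ`, one has `𝔪_θ = R_θ ∩ 𝔪_θ R`. -/
theorem stmt_3 {R : Type*} [CommRing R] (h2 : IsUnit (2 : R))
    (θ : R ≃+* R) (hθ : ∀ x, θ (θ x) = x)
    (𝔪θ : Ideal (RingHom.eqLocus (θ : R →+* R) (RingHom.id R)))
    (hm : 𝔪θ.IsMaximal) :
    𝔪θ = Ideal.comap (RingHom.eqLocus (θ : R →+* R) (RingHom.id R)).subtype
      (Ideal.map (RingHom.eqLocus (θ : R →+* R) (RingHom.id R)).subtype 𝔪θ) := by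
  set Rθ := RingHom.eqLocus (θ : R →+* R) (RingHom.id R) with hRθ
  refine le_antisymm Ideal.le_comap_map ?_
  intro y hy
  rw [Ideal.mem_comap] at hy
  -- 2⁻¹
  obtain ⟨u, hu⟩ := h2
  set v : R := ↑u⁻¹ with hv
  have hv2 : v * 2 = 1 := by rw [hv, ← hu]; exact u.inv_mul
  have h2v : (2 : R) * v = 1 := by rw [mul_comm]; exact hv2
  have hθ2 : θ (2 : R) = 2 := by rw [← one_add_one_eq_two, map_add, map_one]
  have hθv : θ v = v := by
    have h1 : θ v * 2 = 1 := by rw [← hθ2, ← map_mul, hv2, map_one]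
    calc θ v = θ v * (2 * v) := by rw [h2v, mul_one]
    _ = (θ v * 2) * v := by ring
    _ = v := by rw [h1, one_mul]
  have hmem : ∀ c : R, θ (v * (c + θ c)) = RingHom.id R (v * (c + θ c)) := by
    intro c
    simp only [map_mul, map_add, hθ, hθv, RingHom.id_apply, add_comm]
  -- decompose hy
  rw [Ideal.map, Ideal.span] at hy
  rw [Submodule.mem_span_set'] at hy
  obtain ⟨n, c, g, hsum⟩ := hy
  choose m hmI hmg using fun i => (g i).2
  simp only [Subring.coe_subtype] at hsum hmg
  have hyfix : θ (y : R) = (y : R) := y.2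
  have hmfix : ∀ i, θ (m i : R) = (m i : R) := fun i => (m i).2
  have key : y = ∑ i, (⟨v * (c i + θ (c i)), hmem (c i)⟩ : Rθ) * m i := by
    apply Subtype.ext
    push_cast
    have hsum' : ∑ i, c i * (m i : R) = (y : R) := by
      rw [← hsum]
      exact Finset.sum_congr rfl fun i _ => by rw [smul_eq_mul, hmg i]
    have hθsum : ∑ i, θ (c i) * (m i : R) = (y : R) := by
      have := congrArg θ hsum'
      rw [map_sum] at this
      simp only [map_mul, hmfix] at this
      rw [this, hyfix]
    calc (y : R) = v * (2 * (y : R)) := by rw [← mul_assoc, hv2, one_mul]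
    _ = v * ((y : R) + (y : R)) := by ring
    _ = v * (∑ i, c i * (m i : R) + ∑ i, θ (c i) * (m i : R)) := by rw [hsum', hθsum]
    _ = ∑ i, v * (c i + θ (c i)) * (m i : R) := by
        rw [← Finset.sum_add_distrib, Finset.mul_sum]
        exact Finset.sum_congr rfl fun i _ => by ring
  rw [key]
  exact Ideal.sum_mem _ fun i _ => Ideal.mul_mem_left _ _ (hmI i)
end

section
/- Let R be a commutative ring in which 3 is invertible and let θ be a ring automorphism of R with θ(θ(θ(x))) = x for all x. Let R_θ be the fixed subring of θ and let 𝔪_θ be a maximal ideal of R_θ. Then 𝔪_θ = R_θ ∩ 𝔪_θR; that is, the contraction to R_θ of the ideal of R generated by (the image of) 𝔪_θ equals 𝔪_θ. -/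
/-!
Averaging over the cyclic group generated by `θ` gives the Reynolds operator
`x ↦ 3⁻¹ (x + θ x + θ² x)`, an `R_θ`-linear retraction of `R` onto `R_θ`. It maps
`𝔪_θ R = 𝔪_θ • R` into `𝔪_θ • R_θ = 𝔪_θ` and fixes `R_θ`, so `R_θ ∩ 𝔪_θ R ⊆ 𝔪_θ`.
-/

theorem Ideal.comap_map_eq_self_of_retraction {A B : Type*} [CommSemiring A] [CommSemiring B]
    [Algebra A B] (ρ : B →ₗ[A] A) (hρ : ∀ a, ρ (algebraMap A B a) = a) (I : Ideal A) :
    (I.map (algebraMap A B)).comap (algebraMap A B) = I := by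
  refine le_antisymm (fun a ha => ?_) Ideal.le_comap_map
  have hmem : algebraMap A B a ∈ I • (⊤ : Submodule A B) := by
    rwa [Ideal.smul_top_eq_map]
  have : a ∈ I • (⊤ : Submodule A B).map ρ := by
    rw [← Submodule.map_smul'', ← hρ a]
    exact Submodule.mem_map_of_mem hmem
  exact Submodule.smul_le.2 (fun r hr b _ => I.mul_mem_right b hr) this

namespace RingHom

variable {R : Type*} [CommRing R] (σ : R →+* R)

def orbitSum (n : ℕ) (x : R) : R := ∑ k ∈ Finset.range n, (σ ^ k) x

variable {σ} {n : ℕ}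

lemma pow_apply_of_apply_eq_self {s : R} (hs : σ s = s) (k : ℕ) : (σ ^ k) s = s := by
  rw [coe_pow]; exact Function.iterate_fixed hs k

lemma apply_orbitSum (hσ : σ ^ n = 1) (x : R) : σ (orbitSum σ n x) = orbitSum σ n x := by
  -- `σ` shifts the orbit sum by one step, and `σ ^ n = 1` wraps the last term around.
  have h := Finset.sum_range_succ' (fun k => (σ ^ k) x) n
  rw [Finset.sum_range_succ, hσ, pow_zero, add_left_inj] at h
  rw [orbitSum, map_sum, h]
  simp only [pow_succ', coe_mul, Function.comp_apply]

lemma orbitSum_add (x y : R) : orbitSum σ n (x + y) = orbitSum σ n x + orbitSum σ n y := by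
  simp only [orbitSum, map_add, Finset.sum_add_distrib]

lemma orbitSum_mul_of_apply_eq_self {s : R} (hs : σ s = s) (x : R) :
    orbitSum σ n (s * x) = s * orbitSum σ n x := by
  simp only [orbitSum, map_mul, pow_apply_of_apply_eq_self hs, Finset.mul_sum]

lemma orbitSum_of_apply_eq_self {s : R} (hs : σ s = s) : orbitSum σ n s = n * s := by
  simp [orbitSum, pow_apply_of_apply_eq_self hs]

lemma apply_inv_natCast (hn : IsUnit (n : R)) : σ ↑hn.unit⁻¹ = ↑hn.unit⁻¹ := by
  have h : σ (↑hn.unit⁻¹ * n) = 1 := by rw [hn.val_inv_mul, map_one]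
  rw [map_mul, map_natCast, ← hn.val_inv_mul] at h
  exact hn.mul_left_inj.1 h

noncomputable def reynolds (hσ : σ ^ n = 1) (hn : IsUnit (n : R)) :
    R →ₗ[σ.eqLocus (RingHom.id R)] σ.eqLocus (RingHom.id R) where
  toFun x := ⟨↑hn.unit⁻¹ * orbitSum σ n x, by
    simp only [mem_eqLocus, map_mul, apply_inv_natCast, apply_orbitSum hσ, id_apply]⟩
  map_add' x y := Subtype.ext (by simp only [orbitSum_add, mul_add, Subring.coe_add])
  map_smul' s x := Subtype.ext (by
    simp only [Subring.smul_def, smul_eq_mul, orbitSum_mul_of_apply_eq_self s.2, id_apply,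
      Subring.coe_mul]; ring)

lemma reynolds_algebraMap (hσ : σ ^ n = 1) (hn : IsUnit (n : R))
    (s : σ.eqLocus (RingHom.id R)) :
    reynolds hσ hn (algebraMap _ R s) = s := by
  ext
  show ↑hn.unit⁻¹ * orbitSum σ n (s : R) = s
  rw [orbitSum_of_apply_eq_self s.2, ← mul_assoc, hn.val_inv_mul, one_mul]

end RingHom

theorem stmt_4_general {R : Type*} [CommRing R] (h3 : IsUnit (3 : R))
    (θ : R ≃+* R) (hθ : ∀ x, θ (θ (θ x)) = x)
    (𝔪θ : Ideal (RingHom.eqLocus (θ : R →+* R) (RingHom.id R))) :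
    𝔪θ = Ideal.comap (RingHom.eqLocus (θ : R →+* R) (RingHom.id R)).subtype
      (Ideal.map (RingHom.eqLocus (θ : R →+* R) (RingHom.id R)).subtype 𝔪θ) := by
  have hθ3 : (θ : R →+* R) ^ 3 = 1 := RingHom.ext fun x => by
    simpa [pow_succ] using hθ x
  have h3' : IsUnit ((3 : ℕ) : R) := by exact_mod_cast h3
  exact (Ideal.comap_map_eq_self_of_retraction (RingHom.reynolds hθ3 h3')
    (RingHom.reynolds_algebraMap hθ3 h3') 𝔪θ).symm

/-- Over a commutative ring `R` with `3` invertible and a ring automorphism `θ` of order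
dividing 3, for any maximal ideal `𝔪_θ` of the fixed subring `R_θ`,
one has `𝔪_θ = R_θ ∩ 𝔪_θ R`. -/
theorem stmt_4 {R : Type*} [CommRing R] (h3 : IsUnit (3 : R))
    (θ : R ≃+* R) (hθ : ∀ x, θ (θ (θ x)) = x)
    (𝔪θ : Ideal (RingHom.eqLocus (θ : R →+* R) (RingHom.id R)))
    (hm : 𝔪θ.IsMaximal) :
    𝔪θ = Ideal.comap (RingHom.eqLocus (θ : R →+* R) (RingHom.id R)).subtype
      (Ideal.map (RingHom.eqLocus (θ : R →+* R) (RingHom.id R)).subtype 𝔪θ) :=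
  stmt_4_general h3 θ hθ 𝔪θ
end

section
/- Let R be a commutative ring in which 3 is invertible and let θ be a ring automorphism of R with θ(θ(θ(x))) = x for all x. Let z, r, r′, r″ ∈ R and suppose the element r·z + r′·θ(z) + r″·θ(θ(z)) is fixed by θ. Then there exists t ∈ R such that r·z + r′·θ(z) + r″·θ(θ(z)) = t·z + θ(t)·θ(z) + θ(θ(t))·θ(θ(z)). -/
/-!
Write `Tr x = x + θ x + θ (θ x)`. Since `θ³ = 1`, the trace is `θ`-invariant, so
`Tr (r' * θ z) = Tr (θ (θ r') * z)` and `Tr (r'' * θ (θ z)) = Tr (θ r'' * z)`; hence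
`S = r * z + r' * θ z + r'' * θ (θ z)` has trace `Tr (c * z)` with `c = r + θ (θ r') + θ r''`.
If `S` is fixed, then `Tr S = 3 * S`, and since `θ` fixes `3⁻¹` we get
`S = Tr (3⁻¹ * c * z) = t * z + θ t * θ z + θ (θ t) * θ (θ z)` with `t = 3⁻¹ * c`.
-/

lemma map_units_inv_eq_self_of_map_eq_self {M F : Type*} [Monoid M] [FunLike F M M]
    [MonoidHomClass F M M] (f : F) (u : Mˣ) (hu : f u = u) : f ↑u⁻¹ = ↑u⁻¹ := by
  refine Units.eq_inv_of_mul_eq_one_left ?_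
  rw [← hu, ← map_mul, u.mul_inv, map_one]

section CubicTrace

variable {R F : Type*} [CommRing R] [FunLike F R R]

def cubicTrace (θ : F) (x : R) : R := x + θ x + θ (θ x)

variable (θ : F)

lemma cubicTrace_add [RingHomClass F R R] (x y : R) :
    cubicTrace θ (x + y) = cubicTrace θ x + cubicTrace θ y := by
  simp only [cubicTrace, map_add]
  ring

lemma cubicTrace_of_map_eq_self {x : R} (hx : θ x = x) : cubicTrace θ x = 3 * x := by
  rw [cubicTrace, hx, hx]
  ring

lemma cubicTrace_mul_of_map_eq_self [RingHomClass F R R] {c : R} (hc : θ c = c) (x : R) :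
    cubicTrace θ (c * x) = c * cubicTrace θ x := by
  simp only [cubicTrace, map_mul, hc]
  ring

variable {θ}

lemma cubicTrace_map (hθ : ∀ x : R, θ (θ (θ x)) = x) (x : R) :
    cubicTrace θ (θ x) = cubicTrace θ x := by
  rw [cubicTrace, cubicTrace, hθ]
  ring

lemma cubicTrace_linearCombination [RingHomClass F R R] (hθ : ∀ x : R, θ (θ (θ x)) = x)
    (z r r' r'' : R) :
    cubicTrace θ (r * z + r' * θ z + r'' * θ (θ z)) =
      cubicTrace θ ((r + θ (θ r') + θ r'') * z) := by
  have h' : r' * θ z = θ (θ (θ r') * z) := by rw [map_mul, hθ]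
  have h'' : r'' * θ (θ z) = θ (θ (θ r'' * z)) := by rw [map_mul, map_mul, hθ]
  rw [h', h'', cubicTrace_add, cubicTrace_add, cubicTrace_map hθ, cubicTrace_map hθ,
    cubicTrace_map hθ, add_mul, add_mul, cubicTrace_add, cubicTrace_add]

end CubicTrace

/-- Over a commutative ring `R` with `3` invertible and a ring automorphism `θ` of order
dividing 3, if `r*z + r'*θ(z) + r''*θ(θ(z))` is `θ`-fixed then it can be written as
`t*z + θ(t)*θ(z) + θ(θ(t))*θ(θ(z))` for some `t`. -/
theorem stmt_7 {R : Type*} [CommRing R] (h3 : IsUnit (3 : R))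
    (θ : R ≃+* R) (hθ : ∀ x, θ (θ (θ x)) = x)
    (z r r' r'' : R)
    (hfix : θ (r * z + r' * θ z + r'' * θ (θ z)) = r * z + r' * θ z + r'' * θ (θ z)) :
    ∃ t : R, r * z + r' * θ z + r'' * θ (θ z) = t * z + θ t * θ z + θ (θ t) * θ (θ z) := by
  set S := r * z + r' * θ z + r'' * θ (θ z)
  set u : R := ↑h3.unit⁻¹
  have hu : u * 3 = 1 := h3.val_inv_mul
  have hθu : θ u = u := map_units_inv_eq_self_of_map_eq_self θ h3.unit (map_ofNat θ 3)
  refine ⟨u * (r + θ (θ r') + θ r''), ?_⟩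
  calc S = u * cubicTrace θ S := by
        rw [cubicTrace_of_map_eq_self θ hfix, ← mul_assoc, hu, one_mul]
    _ = cubicTrace θ (u * (r + θ (θ r') + θ r'') * z) := by
        rw [cubicTrace_linearCombination hθ, mul_assoc, cubicTrace_mul_of_map_eq_self θ hθu]
    _ = _ := by simp only [cubicTrace, map_mul]
end

section
/- Let R be a commutative ring in which 2 is invertible and let θ be a ring automorphism of R with θ(θ(x)) = x for all x. Then, inside GL₃(R), the subgroup generated by the matrices X(r, r·θ(r)/2) for r ∈ R is exactly the set {X(t,u) | t, u ∈ R, t·θ(t) = u + θ(u)}. In particular, every matrix X(t,u) with t·θ(t) = u + θ(u) is a product of matrices of the form X(r, r·θ(r)/2)^{±1} with r ∈ R. -/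
/-!
Write `½` for the inverse of `2` and `g r = X(r, r θ(r) ½)`. Under multiplication
`X(t,u) X(t',u') = X(t + t', u + u' + θ(t) t')`, so the matrices `X(t,u)` with
`t θ(t) = u + θ(u)` form a subgroup containing every `g r`. Conversely such an `X(t,u)`
splits as `g t · X(0,c)` with `c = u - t θ(t) ½`, which satisfies `θ(c) = -c`, and for such `c`
one checks `X(0,c) = g(1+c)⁻¹ · g 1 · g c`.
-/

/-- The upper unitriangular matrix `X(t,u)` with rows `(1, θ t, u)`, `(0, 1, t)`, `(0, 0, 1)`. -/
def Xmat {R : Type*} [CommRing R] (θ : R ≃+* R) (t u : R) : Matrix (Fin 3) (Fin 3) R :=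
  !![1, θ t, u; 0, 1, t; 0, 0, 1]

theorem map_eq_self_of_two_mul_eq_one_s11 {R F : Type*} [CommRing R] [FunLike F R R]
    [RingHomClass F R R] (f : F) {half : R} (hhalf : 2 * half = 1) : f half = half := by
  have h : 2 * f half = 1 := by simpa [map_ofNat] using congrArg f hhalf
  linear_combination half * h - f half * hhalf

namespace Xmat

variable {R : Type*} [CommRing R] (θ : R ≃+* R)

theorem mul (t u t' u' : R) :
    Xmat θ t u * Xmat θ t' u' = Xmat θ (t + t') (u + u' + θ t * t') := by
  ext i j
  fin_cases i <;> fin_cases j <;>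
    simp [Xmat, Matrix.mul_apply, Fin.sum_univ_three] <;> ring

theorem zero_zero : Xmat θ 0 0 = 1 := by
  ext i j
  fin_cases i <;> fin_cases j <;> simp [Xmat]

theorem eq_mul_zero (t u a : R) : Xmat θ t u = Xmat θ t a * Xmat θ 0 (u - a) := by
  rw [mul]
  congr 1 <;> ring

theorem mul_neg_self {t u : R} (h : t * θ t = u + θ u) :
    Xmat θ t u * Xmat θ (-t) (θ u) = 1 := by
  rw [mul, add_neg_cancel, ← zero_zero θ]
  congr 1
  linear_combination -h

theorem neg_mul_self {t u : R} (h : t * θ t = u + θ u) :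
    Xmat θ (-t) (θ u) * Xmat θ t u = 1 := by
  rw [mul, neg_add_cancel, ← zero_zero θ, map_neg]
  congr 1
  linear_combination -h

def toGL (t u : R) (h : t * θ t = u + θ u) : Matrix.GeneralLinearGroup (Fin 3) R :=
  ⟨Xmat θ t u, Xmat θ (-t) (θ u), mul_neg_self θ h, neg_mul_self θ h⟩

@[simp]
theorem coe_toGL (t u : R) (h : t * θ t = u + θ u) :
    (toGL θ t u h : Matrix (Fin 3) (Fin 3) R) = Xmat θ t u := rfl

@[simp]
theorem coe_toGL_inv (t u : R) (h : t * θ t = u + θ u) :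
    (((toGL θ t u h)⁻¹ : Matrix.GeneralLinearGroup (Fin 3) R) : Matrix (Fin 3) (Fin 3) R) =
      Xmat θ (-t) (θ u) := rfl

variable {θ}

theorem zero_eq_mul_gen {half : R} (hhalf : 2 * half = 1) {c : R} (hc : θ c = -c) :
    Xmat θ 0 c = Xmat θ (-(1 + c)) (θ ((1 + c) * θ (1 + c) * half))
      * Xmat θ 1 (1 * θ 1 * half) * Xmat θ c (c * θ c * half) := by
  simp only [mul, map_add, map_mul, map_one, map_neg, map_eq_self_of_two_mul_eq_one_s11 θ hhalf, hc]
  congr 1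
  · ring
  · linear_combination (c * c - 1) * hhalf

variable (hθ : ∀ x, θ (θ x) = x)
include hθ

def subgroup : Subgroup (Matrix.GeneralLinearGroup (Fin 3) R) where
  carrier := {M | ∃ t u : R, t * θ t = u + θ u ∧ (M : Matrix (Fin 3) (Fin 3) R) = Xmat θ t u}
  one_mem' := ⟨0, 0, by simp, (zero_zero θ).symm⟩
  mul_mem' := by
    rintro A B ⟨t, u, h, hA⟩ ⟨t', u', h', hB⟩
    refine ⟨t + t', u + u' + θ t * t', ?_, by rw [Units.val_mul, hA, hB, mul]⟩
    simp only [map_add, map_mul, hθ]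
    linear_combination h + h'
  inv_mem' := by
    rintro A ⟨t, u, h, hA⟩
    obtain rfl : A = toGL θ t u h := Units.ext hA
    refine ⟨-t, θ u, ?_, rfl⟩
    rw [map_neg, hθ]
    linear_combination h

variable {half : R} (hhalf : 2 * half = 1)
include hhalf

theorem mul_self_eq_half_add_map (r : R) :
    r * θ r = r * θ r * half + θ (r * θ r * half) := by
  rw [map_mul, map_mul, hθ, map_eq_self_of_two_mul_eq_one_s11 θ hhalf]
  linear_combination -(r * θ r) * hhalf

theorem closure_gen_eq_subgroup :
    Subgroup.closure {N : Matrix.GeneralLinearGroup (Fin 3) R |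
        ∃ r : R, (N : Matrix (Fin 3) (Fin 3) R) = Xmat θ r (r * θ r * half)} = subgroup hθ := by
  refine le_antisymm ((Subgroup.closure_le _).2 ?_) ?_
  · rintro N ⟨r, hN⟩
    exact ⟨r, _, mul_self_eq_half_add_map hθ hhalf r, hN⟩
  · rintro M ⟨t, u, h, hM⟩
    let g (r : R) := toGL θ r _ (mul_self_eq_half_add_map hθ hhalf r)
    have hg (r : R) : g r ∈ Subgroup.closure {N : Matrix.GeneralLinearGroup (Fin 3) R |
        ∃ r : R, (N : Matrix (Fin 3) (Fin 3) R) = Xmat θ r (r * θ r * half)} :=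
      Subgroup.subset_closure ⟨r, rfl⟩
    set c := u - t * θ t * half
    have hc : θ c = -c := by
      rw [map_sub, map_mul, map_mul, hθ, map_eq_self_of_two_mul_eq_one_s11 θ hhalf]
      linear_combination -h - t * θ t * hhalf
    have hM' : M = g t * ((g (1 + c))⁻¹ * g 1 * g c) := by
      ext : 1
      simp only [hM, Units.val_mul, g, coe_toGL, coe_toGL_inv]
      rw [eq_mul_zero θ t u (t * θ t * half), zero_eq_mul_gen hhalf hc]
    rw [hM']
    exact mul_mem (hg t) (mul_mem (mul_mem (inv_mem (hg _)) (hg 1)) (hg c))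

end Xmat

/-- With `2` invertible, the subgroup of `GL₃(R)` generated by the matrices
`X(r, r·θ(r)/2)` is exactly `{X(t,u) | t·θ(t) = u + θ(u)}`. -/
theorem stmt_11 {R : Type*} [CommRing R] (h2 : IsUnit (2 : R))
    (θ : R ≃+* R) (hθ : ∀ x, θ (θ x) = x) :
    ∀ M : Matrix.GeneralLinearGroup (Fin 3) R,
      M ∈ Subgroup.closure {N : Matrix.GeneralLinearGroup (Fin 3) R |
          ∃ r : R, (N : Matrix (Fin 3) (Fin 3) R)
            = Xmat θ r (r * θ r * Ring.inverse (2 : R))} ↔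
      ∃ t u : R, t * θ t = u + θ u ∧ (M : Matrix (Fin 3) (Fin 3) R) = Xmat θ t u := by
  intro M
  rw [Xmat.closure_gen_eq_subgroup hθ (Ring.mul_inverse_cancel _ h2)]
  rfl
end

section
/- Let K be a field and let θ be a ring automorphism of K with θ(θ(x)) = x for all x and θ ≠ id. Then for every nonzero u ∈ K there exist nonzero u₁, u₂ ∈ K and elements t₁, t₂ ∈ K such that t₁·θ(t₁) = u₁ + θ(u₁), t₂·θ(t₂) = u₂ + θ(u₂), and u = u₁·u₂. (In the paper's notation: if R is a field then every unit lies in ℛ₂, i.e. is a product of two elements of ℛ₁ = {u ∈ K* | ∃ t, (t,u) ∈ 𝒜(K)*}.) -/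
/-!
Pick `d ≠ 0` with `θ d = -d` (e.g. `d = w - θ w` for any `w` moved by `θ`). Any `v` with
`v + θ v = 0` is represented with `t = 0`, any `v` with `v + θ v = 1` with `t = 1`.
If `θ u = u`, then `u = d · (u / d)` with both factors skew. Otherwise
`u = (u - θ u) · (u / (u - θ u))`, where the first factor is skew and the second has trace `1`.
-/

section Involution

variable {K : Type*} [Field K] (θ : K ≃+* K) (hθ : ∀ x, θ (θ x) = x)
include hθ

theorem apply_sub_apply_self (x : K) : θ (x - θ x) = -(x - θ x) := by
  rw [map_sub, hθ, neg_sub]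

theorem exists_ne_zero_apply_eq_neg (hne : θ ≠ RingEquiv.refl K) :
    ∃ d : K, d ≠ 0 ∧ θ d = -d := by
  obtain ⟨w, hw⟩ : ∃ w, θ w ≠ w := by
    by_contra! h
    exact hne (RingEquiv.ext h)
  exact ⟨w - θ w, sub_ne_zero.mpr hw.symm, apply_sub_apply_self θ hθ w⟩

theorem div_sub_apply_add_apply {u : K} (hu : u - θ u ≠ 0) :
    u / (u - θ u) + θ (u / (u - θ u)) = 1 := by
  rw [map_div₀, apply_sub_apply_self θ hθ, div_neg, ← sub_eq_add_neg, ← sub_div, div_self hu]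

end Involution

/-- If `K` is a field with a nontrivial involutive ring automorphism `θ`, then every nonzero
element of `K` is a product of two nonzero elements `u₁, u₂` each admitting `tᵢ` with
`tᵢ·θ(tᵢ) = uᵢ + θ(uᵢ)` (i.e. every unit lies in `ℛ₂`). -/
theorem stmt_15 {K : Type*} [Field K] (θ : K ≃+* K) (hθ : ∀ x, θ (θ x) = x)
    (hne : θ ≠ RingEquiv.refl K) (u : K) (hu : u ≠ 0) :
    ∃ u₁ u₂ t₁ t₂ : K, u₁ ≠ 0 ∧ u₂ ≠ 0 ∧
      t₁ * θ t₁ = u₁ + θ u₁ ∧ t₂ * θ t₂ = u₂ + θ u₂ ∧ u = u₁ * u₂ := by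
  by_cases hfix : θ u = u
  · obtain ⟨d, hd, hθd⟩ := exists_ne_zero_apply_eq_neg θ hθ hne
    refine ⟨d, u / d, 0, 0, hd, div_ne_zero hu hd, ?_, ?_, (mul_div_cancel₀ u hd).symm⟩
    · rw [hθd, zero_mul, add_neg_cancel]
    · rw [map_div₀, hfix, hθd, div_neg, zero_mul, add_neg_cancel]
  · have hsub : u - θ u ≠ 0 := sub_ne_zero.mpr (Ne.symm hfix)
    refine ⟨u - θ u, u / (u - θ u), 0, 1, hsub, div_ne_zero hu hsub, ?_, ?_,
      (mul_div_cancel₀ u hsub).symm⟩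
    · rw [apply_sub_apply_self θ hθ, zero_mul, add_neg_cancel]
    · rw [div_sub_apply_add_apply θ hθ hsub, map_one, one_mul]
end

section
/- Let R be a commutative ring and let J be an ideal of R contained in the Jacobson radical of R. Let t ∈ J and s ∈ R. Then 1 − s·t is a unit of R, and setting a := −t·s²·(1 − s·t)⁻¹ and b := t·(1 − s·t)⁻¹, one has a, b ∈ J and the 2×2 matrix identity [[1, s], [0, 1]] · [[1, 0], [t, 1]] · [[1, −s], [0, 1]] = [[1, a], [0, 1]] · [[(1 − s·t)⁻¹, 0], [0, 1 − s·t]] · [[1, 0], [b, 1]]. -/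
theorem Ideal.isUnit_one_sub_mul_of_mem_jacobson_bot {R : Type*} [CommRing R] {x : R}
    (hx : x ∈ Ideal.jacobson (⊥ : Ideal R)) (y : R) : IsUnit (1 - y * x) := by
  simpa [sub_eq_add_neg, mul_comm, add_comm] using Ideal.mem_jacobson_bot.1 hx (-y)

theorem Matrix.upper_mul_lower_mul_upper_neg_eq {R : Type*} [CommRing R] (s t u : R)
    (hu : (1 - s * t) * u = 1) :
    (!![1, s; 0, 1] : Matrix (Fin 2) (Fin 2) R) * !![1, 0; t, 1] * !![1, -s; 0, 1] =
      !![1, -(t * s ^ 2) * u; 0, 1] * !![u, 0; 0, 1 - s * t] * !![1, 0; t * u, 1] := by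
  simp only [Matrix.mul_fin_two, EmbeddingLike.apply_eq_iff_eq, Matrix.vecCons_inj, and_true]
  refine ⟨⟨?_, ?_⟩, ?_, ?_⟩
  · linear_combination (s ^ 2 * t ^ 2 * u - s * t - 1) * hu
  · linear_combination s ^ 2 * t * hu
  · linear_combination -t * hu
  · ring

/-- For `t` in an ideal `J` contained in the Jacobson radical and any `s`, the element
`1 - s·t` is a unit, and conjugating the lower elementary matrix by the upper one gives a
`UHV`-decomposition with entries `a = -t·s²·(1-st)⁻¹ ∈ J` and `b = t·(1-st)⁻¹ ∈ J`. -/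
theorem stmt_16 {R : Type*} [CommRing R] (J : Ideal R) (hJ : J ≤ Ideal.jacobson ⊥)
    (t : R) (ht : t ∈ J) (s : R) :
    IsUnit (1 - s * t) ∧
    -(t * s ^ 2) * Ring.inverse (1 - s * t) ∈ J ∧
    t * Ring.inverse (1 - s * t) ∈ J ∧
    (!![1, s; 0, 1] : Matrix (Fin 2) (Fin 2) R) * !![1, 0; t, 1] * !![1, -s; 0, 1] =
      !![1, -(t * s ^ 2) * Ring.inverse (1 - s * t); 0, 1] *
        !![Ring.inverse (1 - s * t), 0; 0, 1 - s * t] *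
        !![1, 0; t * Ring.inverse (1 - s * t), 1] := by
  have hu : IsUnit (1 - s * t) := Ideal.isUnit_one_sub_mul_of_mem_jacobson_bot (hJ ht) s
  have hts : t * s ^ 2 ∈ J := J.mul_mem_right _ ht
  exact ⟨hu, J.mul_mem_right _ (J.neg_mem hts), J.mul_mem_right _ ht,
    Matrix.upper_mul_lower_mul_upper_neg_eq s t _ (Ring.mul_inverse_cancel _ hu)⟩
end

section
/- Let G be a group, E a subgroup of G that is perfect (i.e. ⁅E, E⁆ = E), L a normal subgroup of G, and K a subgroup of G with L ≤ K, ⁅E, K⁆ ≤ L, and ⁅K, K⁆ ≤ L. If g ∈ G satisfies ⁅h, g⁆ ∈ K for every h ∈ E, then ⁅h, g⁆ ∈ L for every h ∈ E. -/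
open scoped commutatorElement

lemma aux_comm {Q : Type*} [Group Q] (A B C : Q)
    (h1 : Commute A ⁅A, C⁆) (h2 : Commute B ⁅A, C⁆)
    (h3 : Commute A ⁅B, C⁆) (h4 : Commute B ⁅B, C⁆)
    (h5 : Commute ⁅A, C⁆ ⁅B, C⁆) : ⁅⁅A, B⁆, C⁆ = 1 := by
  set u := ⁅A, C⁆ with hu
  set v := ⁅B, C⁆ with hv
  rw [commutatorElement_eq_one_iff_commute]
  have key : C * ⁅A, B⁆ * C⁻¹ = ⁅u⁻¹ * A, v⁻¹ * B⁆ := by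
    rw [hu, hv]; group
  have word : u⁻¹ * (A * (v⁻¹ * (B * (A⁻¹ * (u * (B⁻¹ * v)))))) =
      A * (B * (A⁻¹ * B⁻¹)) := by
    rw [h3.inv_right.left_comm, h1.inv_left.left_comm, h2.left_comm, h1.left_comm,
      h5.symm.inv_left.left_comm, inv_mul_cancel_left,
      h3.symm.inv_left.left_comm, h4.symm.inv_left.left_comm,
      h3.symm.inv_left.inv_right.left_comm, h4.symm.inv_left.inv_right.left_comm,
      inv_mul_cancel, mul_one]
  have e1 : ⁅u⁻¹ * A, v⁻¹ * B⁆ = ⁅A, B⁆ := by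
    have l : ⁅u⁻¹ * A, v⁻¹ * B⁆ = u⁻¹ * (A * (v⁻¹ * (B * (A⁻¹ * (u * (B⁻¹ * v)))))) := by
      group
    have r : ⁅A, B⁆ = A * (B * (A⁻¹ * B⁻¹)) := by group
    rw [l, word, r]
  have heq : C * ⁅A, B⁆ * C⁻¹ = ⁅A, B⁆ := key.trans e1
  have : ⁅A, B⁆ * C = C * ⁅A, B⁆ := by
    calc ⁅A, B⁆ * C = (C * ⁅A, B⁆ * C⁻¹) * C := by rw [heq]
      _ = C * ⁅A, B⁆ := by group
  exact this

/-- If `E` is a perfect subgroup of `G`, `L` a normal subgroup of `G`, `K` a subgroup with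
`L ≤ K`, `⁅E,K⁆ ≤ L` and `⁅K,K⁆ ≤ L`, and `g ∈ G` satisfies `⁅h,g⁆ ∈ K` for all `h ∈ E`,
then `⁅h,g⁆ ∈ L` for all `h ∈ E`. -/
theorem stmt_17 {G : Type*} [Group G] (E L K : Subgroup G)
    (hE : ⁅E, E⁆ = E) (hL : L.Normal) (hLK : L ≤ K)
    (hEK : ⁅E, K⁆ ≤ L) (hKK : ⁅K, K⁆ ≤ L)
    (g : G) (hg : ∀ h ∈ E, ⁅h, g⁆ ∈ K) :
    ∀ h ∈ E, ⁅h, g⁆ ∈ L := by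
  -- work in the quotient G ⧸ L
  let f := QuotientGroup.mk' L
  have memL : ∀ x : G, x ∈ L ↔ f x = 1 := fun x => (QuotientGroup.eq_one_iff x).symm
  have comm : ∀ x y : G, ⁅x, y⁆ ∈ L → Commute (f x) (f y) := by
    intro x y hxy
    rw [← commutatorElement_eq_one_iff_commute, ← map_commutatorElement, ← memL]
    exact hxy
  -- key: commutators of generators land in L
  have key : ∀ a ∈ E, ∀ b ∈ E, ⁅⁅a, b⁆, g⁆ ∈ L := by
    intro a ha b hb
    rw [memL, map_commutatorElement, map_commutatorElement]
    refine aux_comm (f a) (f b) (f g) ?_ ?_ ?_ ?_ ?_ <;>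
      rw [← map_commutatorElement]
    · exact comm _ _ (hEK (Subgroup.commutator_mem_commutator ha (hg a ha)))
    · exact comm _ _ (hEK (Subgroup.commutator_mem_commutator hb (hg a ha)))
    · exact comm _ _ (hEK (Subgroup.commutator_mem_commutator ha (hg b hb)))
    · exact comm _ _ (hEK (Subgroup.commutator_mem_commutator hb (hg b hb)))
    · exact comm _ _ (hKK (Subgroup.commutator_mem_commutator (hg a ha) (hg b hb)))
  -- the set of elements whose commutator with g lies in L is a subgroup
  let S : Subgroup G :=
    { carrier := {x | x ∈ E ∧ ⁅x, g⁆ ∈ L}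
      one_mem' := by
        refine ⟨one_mem E, ?_⟩
        simpa using L.one_mem
      mul_mem' := by
        rintro x y ⟨hxE, hx⟩ ⟨hyE, hy⟩
        refine ⟨mul_mem hxE hyE, ?_⟩
        have hid : ⁅x * y, g⁆ = x * ⁅y, g⁆ * x⁻¹ * ⁅x, g⁆ := by group
        rw [hid]
        exact mul_mem (hL.conj_mem _ hy x) hx
      inv_mem' := by
        rintro x ⟨hxE, hx⟩
        refine ⟨inv_mem hxE, ?_⟩
        have hid : ⁅x⁻¹, g⁆ = x⁻¹ * ⁅x, g⁆⁻¹ * (x⁻¹)⁻¹ := by group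
        rw [hid]
        exact hL.conj_mem _ (inv_mem hx) x⁻¹ }
  have hES : E ≤ S := by
    conv_lhs => rw [← hE]
    rw [Subgroup.commutator_le]
    intro p hp q hq
    exact ⟨hE ▸ Subgroup.commutator_mem_commutator hp hq, key p hp q hq⟩
  intro h hh
  exact (hES hh).2
end
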